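/- arXiv:2110.09369 — 7 statements merged into one kernel-verified Lean document; each statement's English description precedes it below -/
import Mathlib

section
/- If a finite set Ex of natural numbers contains an arithmetic progression of length ℓ (with common difference d ≥ 1) but not one of length ℓ+1, then the compatibility graph C_Ex contains a half-induced matching of size ℓ+1. Concretely, setting a_i = d(i-1) and b_i = a + (ℓ+1-i)d for i = 1,…,ℓ+1, we have a_i + b_i ∉ Ex for all i, and a_i + b_j ∈ Ex for all i < j. -/
/-- If a finite set `Ex` contains an arithmetic progression of length `ℓ`
(common difference `d ≥ 1`) but not one of length `ℓ+1`, then setting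
`a_i = d*(i-1)` and `b_i = a + (ℓ+1-i)*d` for `i = 1,…,ℓ+1`, the `a_i` are
pairwise distinct, the `b_i` are pairwise distinct, `a_i + b_i ∉ Ex` for all
`i`, and `a_i + b_j ∈ Ex` whenever `i < j`; i.e. the compatibility graph
`C_Ex` has a half-induced matching of size `ℓ+1`. -/
theorem stmt0 (Ex : Finset ℕ) (a d ℓ : ℕ) (hd : 1 ≤ d)
    (hAP : ∀ i < ℓ, a + i * d ∈ Ex) (hno : a + ℓ * d ∉ Ex) :
    (∀ i i', 1 ≤ i → i ≤ ℓ + 1 → 1 ≤ i' → i' ≤ ℓ + 1 →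
      d * (i - 1) = d * (i' - 1) → i = i') ∧
    (∀ i i', 1 ≤ i → i ≤ ℓ + 1 → 1 ≤ i' → i' ≤ ℓ + 1 →
      a + (ℓ + 1 - i) * d = a + (ℓ + 1 - i') * d → i = i') ∧
    (∀ i, 1 ≤ i → i ≤ ℓ + 1 → d * (i - 1) + (a + (ℓ + 1 - i) * d) ∉ Ex) ∧
    (∀ i j, 1 ≤ i → i < j → j ≤ ℓ + 1 → d * (i - 1) + (a + (ℓ + 1 - j) * d) ∈ Ex) := by
  refine ⟨?_, ?_, ?_, ?_⟩
  · intro i i' h1 h2 h3 h4 h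
    have := Nat.eq_of_mul_eq_mul_left (show 0 < d by omega) h
    omega
  · intro i i' h1 h2 h3 h4 h
    have : (ℓ + 1 - i) * d = (ℓ + 1 - i') * d := by omega
    have := Nat.eq_of_mul_eq_mul_right (show 0 < d by omega) this
    omega
  · intro i h1 h2 hmem
    apply hno
    have e : d * (i - 1) + (a + (ℓ + 1 - i) * d) = a + ℓ * d := by
      obtain ⟨p, q, hp, hq, hpq⟩ : ∃ p q, i - 1 = p ∧ ℓ + 1 - i = q ∧ p + q = ℓ :=
        ⟨i - 1, ℓ + 1 - i, rfl, rfl, by omega⟩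
      rw [hp, hq, ← hpq]; ring
    rwa [e] at hmem
  · intro i j h1 h2 h3
    have e : d * (i - 1) + (a + (ℓ + 1 - j) * d) = a + ((i - 1) + (ℓ + 1 - j)) * d := by
      obtain ⟨p, q, hp, hq⟩ : ∃ p q, i - 1 = p ∧ ℓ + 1 - j = q := ⟨_, _, rfl, rfl⟩
      rw [hp, hq]; ring
    rw [e]
    exact hAP _ (by omega)
end

section
/- Let Ex ⊆ ℕ be finite with |Ex| = ℓ ≥ 2. If the compatibility graph C_Ex contains a half-induced matching of size ℓ+1, then Ex is an arithmetic progression, i.e., writing Ex = {x_1 < x_2 < … < x_ℓ}, the differences x_{i+1} - x_i are all equal. -/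
/-- Upward shift lemma: if all of `S` except `s0` shifts by `t` into `S`,
then `S` is an AP with difference `t` and `s0` is its top element. -/
lemma key1 (t : ℕ) (ht : 0 < t) :
    ∀ (S : Finset ℕ), ∀ s0 ∈ S, (∀ e ∈ S, e ≠ s0 → e + t ∈ S) →
    ∃ x, S = (Finset.range S.card).image (fun i => x + i * t) ∧
      s0 = x + (S.card - 1) * t := by
  intro S
  induction S using Finset.strongInduction with
  | _ S ih =>
    intro s0 hs0 h
    by_cases hE : (S.erase s0).Nonempty
    · set S' := S.erase s0 with hS'
      set M := S'.max' hE with hM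
      have hMS' : M ∈ S' := S'.max'_mem hE
      have hMS : M ∈ S := Finset.mem_of_mem_erase hMS'
      have hMne : M ≠ s0 := Finset.ne_of_mem_erase hMS'
      have hMt : M + t ∈ S := h M hMS hMne
      have hMts0 : M + t = s0 := by
        by_contra hc
        have : M + t ∈ S' := Finset.mem_erase.mpr ⟨hc, hMt⟩
        have := S'.le_max' _ this
        omega
      have hsub : S' ⊂ S := Finset.erase_ssubset hs0
      have hstep : ∀ e ∈ S', e ≠ M → e + t ∈ S' := by
        intro e he hne
        have heS : e ∈ S := Finset.mem_of_mem_erase he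
        have hes0 : e ≠ s0 := Finset.ne_of_mem_erase he
        have het : e + t ∈ S := h e heS hes0
        refine Finset.mem_erase.mpr ⟨?_, het⟩
        intro hc
        exact hne (by omega)
      obtain ⟨x, hx1, hx2⟩ := ih S' hsub M hMS' hstep
      have hcardpos : 0 < S'.card := Finset.card_pos.mpr hE
      have hScard : S.card = S'.card + 1 := by
        rw [hS', Finset.card_erase_of_mem hs0] at *
        omega
      have hkey : x + S'.card * t = s0 := by
        have hn : S'.card - 1 + 1 = S'.card := by omega
        calc x + S'.card * t = x + (S'.card - 1 + 1) * t := by rw [hn]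
        _ = x + (S'.card - 1) * t + t := by ring
        _ = M + t := by rw [hx2]
        _ = s0 := hMts0
      refine ⟨x, ?_, ?_⟩
      · have hins : S = insert s0 S' := (Finset.insert_erase hs0).symm
        rw [hins, Finset.card_insert_of_notMem (Finset.notMem_erase _ _),
          Finset.range_add_one, Finset.image_insert, ← hx1, hkey]
      · rw [hScard]
        simpa using hkey.symm
    · have hSsingle : S = {s0} := by
        apply Finset.eq_singleton_iff_unique_mem.mpr
        refine ⟨hs0, ?_⟩
        intro y hy
        by_contra hc
        exact hE ⟨y, Finset.mem_erase.mpr ⟨hc, hy⟩⟩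
      refine ⟨s0, ?_, ?_⟩ <;> simp [hSsingle]

/-- Downward shift lemma: if all of `S` except `s0` shifts by `t` down into `S`,
then `S` is an AP with difference `t` and `s0` is its bottom element. -/
lemma key2 (t : ℕ) (ht : 0 < t) :
    ∀ (S : Finset ℕ), ∀ s0 ∈ S, (∀ e ∈ S, e ≠ s0 → t ≤ e ∧ e - t ∈ S) →
    ∃ x, S = (Finset.range S.card).image (fun i => x + i * t) ∧ s0 = x := by
  intro S
  induction S using Finset.strongInduction with
  | _ S ih =>
    intro s0 hs0 h
    by_cases hE : (S.erase s0).Nonempty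
    · set S' := S.erase s0 with hS'
      set M := S'.min' hE with hM
      have hMS' : M ∈ S' := S'.min'_mem hE
      have hMS : M ∈ S := Finset.mem_of_mem_erase hMS'
      have hMne : M ≠ s0 := Finset.ne_of_mem_erase hMS'
      obtain ⟨htM, hMt⟩ := h M hMS hMne
      have hMts0 : M - t = s0 := by
        by_contra hc
        have : M - t ∈ S' := Finset.mem_erase.mpr ⟨hc, hMt⟩
        have := S'.min'_le _ this
        omega
      have hsub : S' ⊂ S := Finset.erase_ssubset hs0
      have hstep : ∀ e ∈ S', e ≠ M → t ≤ e ∧ e - t ∈ S' := by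
        intro e he hne
        have heS : e ∈ S := Finset.mem_of_mem_erase he
        have hes0 : e ≠ s0 := Finset.ne_of_mem_erase he
        obtain ⟨hte, het⟩ := h e heS hes0
        have hge : M ≤ e := S'.min'_le _ he
        refine ⟨hte, Finset.mem_erase.mpr ⟨?_, het⟩⟩
        intro hc
        exact hne (by omega)
      obtain ⟨x, hx1, hx2⟩ := ih S' hsub M hMS' hstep
      have hcardpos : 0 < S'.card := Finset.card_pos.mpr hE
      have hScard : (insert s0 S').card = S'.card + 1 :=
        Finset.card_insert_of_notMem (Finset.notMem_erase _ _)
      have hins : S = insert s0 S' := (Finset.insert_erase hs0).symm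
      refine ⟨s0, ?_, rfl⟩
      rw [hins, hScard]
      ext e
      simp only [Finset.mem_insert, Finset.mem_image, Finset.mem_range]
      constructor
      · rintro (rfl | heS')
        · exact ⟨0, by omega, by simp⟩
        · rw [hx1] at heS'
          simp only [Finset.mem_image, Finset.mem_range] at heS'
          obtain ⟨i, hi, rfl⟩ := heS'
          refine ⟨i + 1, by omega, ?_⟩
          have : s0 + t = M := by omega
          have hxM : x = M := hx2.symm
          calc s0 + (i + 1) * t = s0 + t + i * t := by ring
          _ = x + i * t := by rw [this, hxM]
      · rintro ⟨i, hi, rfl⟩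
        rcases Nat.eq_zero_or_pos i with rfl | hipos
        · left; simp
        · right
          rw [hx1]
          simp only [Finset.mem_image, Finset.mem_range]
          refine ⟨i - 1, by omega, ?_⟩
          have h1 : s0 + t = M := by omega
          have hxM : x = M := hx2.symm
          have h2 : i - 1 + 1 = i := by omega
          calc x + (i - 1) * t = s0 + t + (i - 1) * t := by rw [hxM, h1]
          _ = s0 + (i - 1 + 1) * t := by ring
          _ = s0 + i * t := by rw [h2]
    · have hSsingle : S = {s0} := by
        apply Finset.eq_singleton_iff_unique_mem.mpr
        refine ⟨hs0, ?_⟩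
        intro y hy
        by_contra hc
        exact hE ⟨y, Finset.mem_erase.mpr ⟨hc, hy⟩⟩
      refine ⟨s0, ?_, rfl⟩
      simp [hSsingle]

/-- If `|Ex| = ℓ ≥ 2` and the compatibility graph `C_Ex` contains a
half-induced matching of size `ℓ+1`, then `Ex` is an arithmetic progression. -/
theorem stmt1 (Ex : Finset ℕ) (ℓ : ℕ) (hℓ : 2 ≤ ℓ) (hcard : Ex.card = ℓ)
    (a b : Fin (ℓ + 1) → ℕ)
    (ha : Function.Injective a) (hb : Function.Injective b)
    (hdiag : ∀ i, a i + b i ∉ Ex)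
    (hoff : ∀ i j : Fin (ℓ + 1), i < j → a i + b j ∈ Ex) :
    ∃ x d : ℕ, 0 < d ∧ Ex = (Finset.range ℓ).image (fun i => x + i * d) := by
  have hval1 : (1 : Fin (ℓ + 1)).val = 1 := by
    rw [Fin.val_one']; exact Nat.mod_eq_of_lt (by omega)
  have h01 : (0 : Fin (ℓ + 1)) < 1 := by
    rw [Fin.lt_def, Fin.val_zero, hval1]; omega
  -- the map k ↦ a 0 + b k.succ is injective with image exactly `Ex`
  set g : Fin ℓ → ℕ := fun k => a 0 + b k.succ with hg
  have hginj : Function.Injective g := by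
    intro k1 k2 hk
    exact Fin.succ_injective _ (hb (Nat.add_left_cancel hk))
  have hFsub : Finset.univ.image g ⊆ Ex := by
    intro e he
    obtain ⟨k, -, rfl⟩ := Finset.mem_image.mp he
    exact hoff 0 k.succ (Fin.succ_pos k)
  have hFcard : (Finset.univ.image g).card = ℓ := by
    rw [Finset.card_image_of_injective _ hginj, Finset.card_univ, Fintype.card_fin]
  have hF : Finset.univ.image g = Ex :=
    Finset.eq_of_subset_of_card_le hFsub (by simp [hFcard, hcard])
  have hsurj : ∀ e ∈ Ex, ∃ k : Fin ℓ, e = a 0 + b k.succ := by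
    intro e he
    rw [← hF] at he
    obtain ⟨k, -, rfl⟩ := Finset.mem_image.mp he
    exact ⟨k, rfl⟩
  have hs0 : a 0 + b 1 ∈ Ex := hoff 0 1 h01
  -- helper: if e ∈ Ex and e ≠ a 0 + b 1, then e = a 0 + b j with 1 < j
  have hbig : ∀ e ∈ Ex, e ≠ a 0 + b 1 →
      ∃ k : Fin ℓ, e = a 0 + b k.succ ∧ (1 : Fin (ℓ + 1)) < k.succ := by
    intro e he hne
    obtain ⟨k, rfl⟩ := hsurj e he
    refine ⟨k, rfl, ?_⟩
    have hk1 : k.succ ≠ 1 := by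
      intro hc; exact hne (by rw [hc])
    rw [Fin.lt_def, hval1, Fin.val_succ]
    have : k.succ.val ≠ (1 : Fin (ℓ + 1)).val := fun hc => hk1 (Fin.ext hc)
    rw [Fin.val_succ, hval1] at this
    omega
  have hane : a 0 ≠ a 1 := by
    intro hc
    exact absurd (ha hc) (Fin.ne_of_lt h01)
  rcases Nat.lt_or_ge (a 0) (a 1) with hlt | hge
  · -- upward shift by t = a 1 - a 0
    set t := a 1 - a 0 with htdef
    have ht : 0 < t := by omega
    have hshift : ∀ e ∈ Ex, e ≠ a 0 + b 1 → e + t ∈ Ex := by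
      intro e he hne
      obtain ⟨k, rfl, hk⟩ := hbig e he hne
      have hmem := hoff 1 k.succ hk
      have : a 0 + b k.succ + t = a 1 + b k.succ := by omega
      rw [this]; exact hmem
    obtain ⟨x, hEx, -⟩ := key1 t ht Ex _ hs0 hshift
    exact ⟨x, t, ht, by rw [hEx, hcard]⟩
  · -- downward shift by t = a 0 - a 1
    have hlt : a 1 < a 0 := by omega
    set t := a 0 - a 1 with htdef
    have ht : 0 < t := by omega
    have hshift : ∀ e ∈ Ex, e ≠ a 0 + b 1 → t ≤ e ∧ e - t ∈ Ex := by
      intro e he hne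
      obtain ⟨k, rfl, hk⟩ := hbig e he hne
      have hmem := hoff 1 k.succ hk
      constructor
      · omega
      · have : a 0 + b k.succ - t = a 1 + b k.succ := by omega
        rw [this]; exact hmem
    obtain ⟨x, hEx, -⟩ := key2 t ht Ex _ hs0 hshift
    exact ⟨x, t, ht, by rw [hEx, hcard]⟩
end

section
/- Let A = {a_1,…,a_ℓ} and B = {b_1,…,b_ℓ} form a half-induced matching of size ℓ in C_Ex. For k ≥ 1 and q ∈ [k, ℓk], define R_q = { s ∈ A^k : Σ_{i∈[k]} ind_A(s_i) = q }, where ind_A(a_i) = i. Then for every q, the only subset of R_q that C_Ex-represents R_q (in the k-dimensional sense) is R_q itself. Consequently, for every ε > 0 there exists k and a set R ⊆ ℕ^k all of whose k-dimensional C_Ex-representative subsets have size at least (ℓ - ε)^k. -/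
/-- `RQ ℓ a k q` is the set of tuples `s ∈ A^k` (with `A = {a 1, …, a ℓ}`)
whose index-sum is `q`, where `ind_A (a i) = i` (1-based). -/
def RQ (ℓ : ℕ) (a : Fin ℓ → ℕ) (k q : ℕ) : Set (Fin k → ℕ) :=
  {s | ∃ f : Fin k → Fin ℓ, (∀ i, s i = a (f i)) ∧ (∑ i, ((f i : ℕ) + 1)) = q}

lemma RQ_eq_image (ℓ : ℕ) (a : Fin ℓ → ℕ) (k q : ℕ) :
    RQ ℓ a k q = (fun g : Fin k → Fin ℓ => fun i => a (g i)) ''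
      {g : Fin k → Fin ℓ | (∑ i, ((g i : ℕ) + 1)) = q} := by
  ext s
  constructor
  · rintro ⟨f, hsf, hfq⟩
    exact ⟨f, hfq, by funext i; exact (hsf i).symm⟩
  · rintro ⟨f, hfq, rfl⟩
    exact ⟨f, fun i => rfl, hfq⟩

/-- Given a half-induced matching of size `ℓ` in `C_Ex`: (1) for every `k` and
`q`, the only subset of `R_q` that `C_Ex`-represents `R_q` (in the
`k`-dimensional sense) is `R_q` itself; (2) for every `ε > 0` there exist `k`
and a finite `R ⊆ ℕ^k` all of whose `k`-dimensional `C_Ex`-representative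
subsets have size at least `(ℓ - ε)^k`. -/
theorem stmt5 (Ex : Finset ℕ) (ℓ : ℕ) (hℓ : 2 ≤ ℓ) (a b : Fin ℓ → ℕ)
    (ha : Function.Injective a) (hb : Function.Injective b)
    (hdiag : ∀ i, a i + b i ∉ Ex)
    (hoff : ∀ i j : Fin ℓ, i < j → a i + b j ∈ Ex) :
    (∀ k q : ℕ, ∀ R' ⊆ RQ ℓ a k q,
      (∀ t : Fin k → ℕ,
        ((∃ s ∈ RQ ℓ a k q, ∀ i, s i + t i ∉ Ex) ↔ ∃ s ∈ R', ∀ i, s i + t i ∉ Ex)) →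
      R' = RQ ℓ a k q) ∧
    (∀ ε : ℝ, 0 < ε → ∃ k : ℕ, ∃ R : Set (Fin k → ℕ), R.Finite ∧
      ∀ R' ⊆ R,
        (∀ t : Fin k → ℕ,
          ((∃ s ∈ R, ∀ i, s i + t i ∉ Ex) ↔ ∃ s ∈ R', ∀ i, s i + t i ∉ Ex)) →
        ((ℓ : ℝ) - ε) ^ k ≤ R'.ncard) := by
  have part1 : ∀ k q : ℕ, ∀ R' ⊆ RQ ℓ a k q,
      (∀ t : Fin k → ℕ,
        ((∃ s ∈ RQ ℓ a k q, ∀ i, s i + t i ∉ Ex) ↔ ∃ s ∈ R', ∀ i, s i + t i ∉ Ex)) →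
      R' = RQ ℓ a k q := by
    intro k q R' hsub hrep
    refine Set.Subset.antisymm hsub ?_
    intro s hs
    obtain ⟨f, hsf, hfq⟩ := hs
    have h1 : ∃ s' ∈ RQ ℓ a k q, ∀ i, s' i + b (f i) ∉ Ex :=
      ⟨s, ⟨f, hsf, hfq⟩, fun i => by rw [hsf i]; exact hdiag (f i)⟩
    obtain ⟨s', hs'R', hcomp⟩ := (hrep (fun i => b (f i))).mp h1
    obtain ⟨g, hsg, hgq⟩ := hsub hs'R'
    have hle : ∀ i, f i ≤ g i := by
      intro i
      by_contra h
      push_neg at h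
      exact hcomp i (by rw [hsg i]; exact hoff (g i) (f i) h)
    have hsum_le : ∀ i ∈ Finset.univ, ((f i : ℕ) + 1) ≤ ((g i : ℕ) + 1) := by
      intro i _
      exact Nat.add_le_add_right (Fin.le_def.mp (hle i)) 1
    have heq : ∀ i ∈ Finset.univ, ((f i : ℕ) + 1) = ((g i : ℕ) + 1) := by
      rw [← Finset.sum_eq_sum_iff_of_le hsum_le, hfq, hgq]
    have hgf : ∀ i, g i = f i := by
      intro i
      have := heq i (Finset.mem_univ i)
      exact Fin.ext (by omega)
    have : s' = s := by
      funext i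
      rw [hsg i, hgf i, ← hsf i]
    rwa [← this]
  refine ⟨part1, ?_⟩
  intro ε hε
  rcases le_or_gt (ℓ : ℝ) ε with hcase | hcase
  · refine ⟨1, ∅, Set.finite_empty, ?_⟩
    intro R' hsub _
    have : ((ℓ : ℝ) - ε) ^ 1 ≤ 0 := by
      rw [pow_one]; linarith
    exact this.trans (by positivity)
  · -- 0 < ℓ - ε
    set c : ℝ := ((ℓ : ℝ) - ε) / ℓ with hc_def
    have hℓpos : (0 : ℝ) < ℓ := by positivity
    have hc0 : 0 ≤ c := by
      apply div_nonneg _ hℓpos.le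
      linarith
    have hc1 : c < 1 := by
      rw [div_lt_one hℓpos]; linarith
    have t1 := tendsto_self_mul_const_pow_of_lt_one hc0 hc1
    have t2 := tendsto_pow_atTop_nhds_zero_of_lt_one hc0 hc1
    have t3 : Filter.Tendsto (fun n : ℕ => c ^ n * (((ℓ : ℝ) - 1) * n + 1))
        Filter.atTop (nhds 0) := by
      have := (t1.const_mul ((ℓ : ℝ) - 1)).add t2
      rw [mul_zero, add_zero] at this
      exact this.congr (fun n => by ring)
    have hev : ∀ᶠ n : ℕ in Filter.atTop, c ^ n * (((ℓ : ℝ) - 1) * n + 1) < 1 :=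
      t3.eventually_lt_const one_pos
    obtain ⟨k, hk⟩ := hev.exists
    -- pigeonhole
    classical
    set F : ℕ → Finset (Fin k → Fin ℓ) :=
      fun q => Finset.univ.filter (fun f => (∑ i, ((f i : ℕ) + 1)) = q) with hF
    have hmem : ∀ f : Fin k → Fin ℓ, (∑ i, ((f i : ℕ) + 1)) ∈ Finset.Icc k (ℓ * k) := by
      intro f
      rw [Finset.mem_Icc]
      constructor
      · calc k = ∑ _i : Fin k, 1 := by simp
          _ ≤ ∑ i, ((f i : ℕ) + 1) := Finset.sum_le_sum (fun i _ => by omega)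
      · calc ∑ i, ((f i : ℕ) + 1) ≤ ∑ _i : Fin k, ℓ :=
              Finset.sum_le_sum (fun i _ => by have := (f i).is_lt; omega)
          _ = ℓ * k := by simp [mul_comm]
    have hsum : ∑ q ∈ Finset.Icc k (ℓ * k), (F q).card = ℓ ^ k := by
      have hcu : Fintype.card (Fin k → Fin ℓ) = ℓ ^ k := by
        simp [Fintype.card_fun]
      have h2 := Finset.card_eq_sum_card_fiberwise
        (fun f (_ : f ∈ (Finset.univ : Finset (Fin k → Fin ℓ))) => hmem f)
      rw [Finset.card_univ, hcu] at h2
      exact h2.symm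
    set D : ℕ := ℓ * k + 1 - k with hD
    have hkle : k ≤ ℓ * k := Nat.le_mul_of_pos_left k (by omega)
    have hDcard : (Finset.Icc k (ℓ * k)).card = D := by
      rw [Nat.card_Icc]
    have hDR : (D : ℝ) = ((ℓ : ℝ) - 1) * k + 1 := by
      have : (D : ℝ) = (ℓ * k + 1 : ℕ) - (k : ℕ) := by
        rw [hD, Nat.cast_sub (by omega)]
      rw [this]; push_cast; ring
    have hDpos : 0 < D := by omega
    have pig : ∃ q ∈ Finset.Icc k (ℓ * k), ((ℓ : ℝ) ^ k) ≤ (D : ℝ) * (F q).card := by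
      by_contra hcon
      push_neg at hcon
      have hlt : ∀ q ∈ Finset.Icc k (ℓ * k), ((F q).card : ℝ) < (ℓ : ℝ) ^ k / D := by
        intro q hq
        rw [lt_div_iff₀ (by positivity)]
        have := hcon q hq
        nlinarith [this]
      have hne : (Finset.Icc k (ℓ * k)).Nonempty := ⟨k, by simp [hkle]⟩
      have := Finset.sum_lt_sum_of_nonempty hne hlt
      rw [Finset.sum_const, hDcard, nsmul_eq_mul] at this
      have hsumR : (∑ q ∈ Finset.Icc k (ℓ * k), ((F q).card : ℝ)) = (ℓ : ℝ) ^ k := by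
        rw [← Nat.cast_sum, hsum]; push_cast; ring
      rw [hsumR, mul_div_cancel₀ _ (by positivity : (D:ℝ) ≠ 0)] at this
      exact lt_irrefl _ this
    obtain ⟨q, _, hq⟩ := pig
    refine ⟨k, RQ ℓ a k q, ?_, ?_⟩
    · rw [RQ_eq_image]
      exact (Set.toFinite _).image _
    · intro R' hsub hrep
      rw [part1 k q R' hsub hrep]
      have hinj : Function.Injective (fun g : Fin k → Fin ℓ => fun i => a (g i)) := by
        intro f g h
        funext i
        exact ha (congrFun h i)
      have hset : {g : Fin k → Fin ℓ | (∑ i, ((g i : ℕ) + 1)) = q} = ↑(F q) := by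
        ext g; simp [hF]
      have hcard : (RQ ℓ a k q).ncard = (F q).card := by
        rw [RQ_eq_image, Set.ncard_image_of_injective _ hinj, hset,
          Set.ncard_coe_finset]
      rw [hcard]
      have hpow : ((ℓ : ℝ) - ε) ^ k = c ^ k * (ℓ : ℝ) ^ k := by
        rw [hc_def, div_pow, div_mul_cancel₀]
        positivity
      rw [hpow]
      calc c ^ k * (ℓ : ℝ) ^ k ≤ c ^ k * ((D : ℝ) * (F q).card) := by
            apply mul_le_mul_of_nonneg_left hq (by positivity)
        _ = (c ^ k * (D : ℝ)) * (F q).card := by ring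
        _ ≤ 1 * (F q).card := by
            apply mul_le_mul_of_nonneg_right _ (by positivity)
            rw [hDR]
            exact hk.le
        _ = (F q).card := one_mul _
end

section
/- In the setting of the previous construction: for each s ∈ R_q, the tuple t defined by t_i = b_{ind_A(s_i)} satisfies (1) s is compatible with t (i.e., s_i + t_i ∉ Ex for all i), and (2) no other s' ∈ R_q is compatible with t. That is, s is the unique element of R_q compatible with t. -/
/-- For a half-induced matching `a, b` of size `ℓ` in `C_Ex` and an element
`s = a ∘ f` of `R_q` (index-sum `q`): the tuple `t = b ∘ f` satisfies
(1) `s` is compatible with `t` (`s_i + t_i ∉ Ex` for all `i`), and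
(2) no other element `s' = a ∘ f'` of `R_q` is compatible with `t`;
that is, `s` is the unique element of `R_q` compatible with `t`. -/
theorem stmt6 (Ex : Finset ℕ) (ℓ : ℕ) (a b : Fin ℓ → ℕ)
    (ha : Function.Injective a) (hb : Function.Injective b)
    (hdiag : ∀ i, a i + b i ∉ Ex)
    (hoff : ∀ i j : Fin ℓ, i < j → a i + b j ∈ Ex)
    (k q : ℕ) (f : Fin k → Fin ℓ) (hf : (∑ i, ((f i : ℕ) + 1)) = q) :
    (∀ i, a (f i) + b (f i) ∉ Ex) ∧
    (∀ f' : Fin k → Fin ℓ, (∑ i, ((f' i : ℕ) + 1)) = q →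
      (∀ i, a (f' i) + b (f i) ∉ Ex) → f' = f) := by
  refine ⟨fun i => hdiag (f i), fun f' hq hcomp => ?_⟩
  have hle : ∀ i, f i ≤ f' i := fun i => by
    by_contra h
    exact hcomp i (hoff _ _ (lt_of_not_ge h))
  have hsum : ∑ i, ((f i : ℕ) + 1) = ∑ i, ((f' i : ℕ) + 1) := hf.trans hq.symm
  have key := (Finset.sum_eq_sum_iff_of_le
    (fun i _ => by exact_mod_cast Nat.add_le_add_right (hle i) 1)).mp hsum
  funext i
  have := key i (Finset.mem_univ i)
  exact (Fin.ext (by omega)).symm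
end

section
/- Fix Ex ⊆ ℕ finite. For the anti-factor join recurrence over U = [0, max Ex] ∪ {⊤}: given tables c_1, c_2 : (X → U) × ℕ → ℤ, define c[f, s] = Σ_{f_1 ⊕ f_2 = f} Σ_{s_1 + s_2 = s} c_1[f_1, s_1]·c_2[f_2, s_2], and define the zeta transform ζ(c)(f, s) = Σ_{g ⪯ f} c[g, s], where g ⪯ f iff g(x) = f(x) or f(x) = ⊤ pointwise. Then for any f with f^{-1}(⊤) = S, writing f = ⟨f^⊤, f^0⟩ with f^0 taking values in [0, max Ex] on X∖S: ζ(c)(f, s) = Σ_{f_1 + f_2 = f^0} Σ_{s_1 + s_2 = s} ζ(c_1)(⟨f^⊤, f_1⟩, s_1) · ζ(c_2)(⟨f^⊤, f_2⟩, s_2). -/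
open scoped Classical

/-- The state set `U = {0,…,M} ∪ {⊤}`, with `⊤` modelled by `none`. -/
abbrev AFU (M : ℕ) := Option (Fin (M + 1))

/-- `u ⊕ v = ⊤` if `u = ⊤`, `v = ⊤`, or `u + v > M`; else `u + v`. -/
def afOplus {M : ℕ} : AFU M → AFU M → AFU M
  | none, _ => none
  | _, none => none
  | some u, some v =>
      if h : (u : ℕ) + (v : ℕ) ≤ M then some ⟨(u : ℕ) + v, Nat.lt_succ_of_le h⟩
      else none

/-- The zeta transform `ζ(c)(f, s) = Σ_{g ⪯ f} c[g, s]`, where `g ⪯ f` iff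
pointwise `g x = f x` or `f x = ⊤`. -/
noncomputable def afZeta {X : Type*} [Fintype X] {M : ℕ}
    (c : (X → AFU M) → ℕ → ℤ) (f : X → AFU M) (s : ℕ) : ℤ :=
  ∑ g : X → AFU M, if ∀ x, g x = f x ∨ f x = none then c g s else 0

/-- The join-node table:
`c[f, s] = Σ_{f₁ ⊕ f₂ = f} Σ_{s₁ + s₂ = s} c₁[f₁, s₁] · c₂[f₂, s₂]`. -/
noncomputable def afJoin {X : Type*} [Fintype X] {M : ℕ}
    (c₁ c₂ : (X → AFU M) → ℕ → ℤ) (f : X → AFU M) (s : ℕ) : ℤ :=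
  ∑ f₁ : X → AFU M, ∑ f₂ : X → AFU M,
    if (fun x => afOplus (f₁ x) (f₂ x)) = f then
      ∑ p ∈ Finset.HasAntidiagonal.antidiagonal s, c₁ f₁ p.1 * c₂ f₂ p.2
    else 0

/-- `⟨f^⊤, f₁⟩`: the function taking value `⊤` on `S = f⁻¹(⊤)` and `f₁`
elsewhere. -/
noncomputable def afGlue {X : Type*} {M : ℕ} (f : X → AFU M)
    (f₁ : {x : X // f x ≠ none} → Fin (M + 1)) : X → AFU M :=
  fun x => if h : f x = none then none else some (f₁ ⟨x, h⟩)

/-! Expanding all zeta transforms, both sides become sums over pairs `(h₁, h₂)` of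
`Σ_{s₁+s₂=s} c₁[h₁,s₁]·c₂[h₂,s₂]`: on the left with weight `[h₁ ⊕ h₂ ⪯ f]`, on the right with
weight the number of splits `f₁ + f₂ = f⁰` such that `h₁ ⪯ ⟨f^⊤, f₁⟩` and `h₂ ⪯ ⟨f^⊤, f₂⟩`.
Off `S = f⁻¹(⊤)` the latter conditions pin down `f₁ = h₁` and `f₂ = h₂`, and since `f⁰ ≤ M` no
overflow to `⊤` occurs, so `f₁ + f₂ = f⁰` says exactly that `h₁ ⊕ h₂ = f` there; on `S` neither
side imposes anything. Hence the two weights agree. -/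

open Finset

section

variable {X : Type*} {M : ℕ}

def AFPrec (g f : X → AFU M) : Prop := ∀ x, g x = f x ∨ f x = none

theorem afPrec_iff_forall_ne_none {g f : X → AFU M} :
    AFPrec g f ↔ ∀ x : {x // f x ≠ none}, g x = some ((f x).getD 0) := by
  refine ⟨fun h x => ?_, fun h x => ?_⟩
  · rw [Option.getD_of_ne_none x.2]
    exact (h x).resolve_right x.2
  · by_cases hx : f x = none
    · exact Or.inr hx
    · exact Or.inl ((h ⟨x, hx⟩).trans (Option.getD_of_ne_none hx 0))

theorem afPrec_afGlue_iff {g f : X → AFU M} {f₁ : {x // f x ≠ none} → Fin (M + 1)} :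
    AFPrec g (afGlue f f₁) ↔ ∀ x : {x // f x ≠ none}, g x = some (f₁ x) := by
  refine ⟨fun h x => ?_, fun h x => ?_⟩
  · simpa [afGlue, x.2] using h x
  · by_cases hx : f x = none
    · exact Or.inr (by simp [afGlue, hx])
    · exact Or.inl (by simpa [afGlue, hx] using h ⟨x, hx⟩)

theorem afOplus_eq_some_iff {u v : AFU M} {m : Fin (M + 1)} :
    afOplus u v = some m ↔ ∃ a b : Fin (M + 1), u = some a ∧ v = some b ∧ (a : ℕ) + b = m := by
  rcases u with _ | a <;> rcases v with _ | b <;> simp only [afOplus, reduceCtorEq, false_and,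
    exists_false, Option.some.injEq, exists_and_left, exists_eq_left']
  split_ifs <;> simp only [Option.some.injEq, Fin.ext_iff, eq_comm, false_iff]
  omega

theorem afOplus_eq_some_and_getD_iff {u v : AFU M} {a b m : Fin (M + 1)} :
    afOplus u v = some m ∧ a = u.getD 0 ∧ b = v.getD 0 ↔
      (a : ℕ) + b = m ∧ u = some a ∧ v = some b := by
  rw [afOplus_eq_some_iff]
  constructor
  · rintro ⟨⟨a, b, rfl, rfl, hm⟩, rfl, rfl⟩
    exact ⟨hm, rfl, rfl⟩
  · rintro ⟨hm, rfl, rfl⟩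
    exact ⟨⟨a, b, rfl, rfl, hm⟩, rfl, rfl⟩

theorem add_eq_and_afPrec_afGlue_iff (h₁ h₂ f : X → AFU M)
    (f₁ f₂ : {x // f x ≠ none} → Fin (M + 1)) :
    ((∀ x, (f₁ x : ℕ) + f₂ x = ((f x.1).getD 0 : Fin (M + 1))) ∧
        AFPrec h₁ (afGlue f f₁) ∧ AFPrec h₂ (afGlue f f₂)) ↔
      AFPrec (fun x => afOplus (h₁ x) (h₂ x)) f ∧
        f₁ = (fun x => (h₁ x.1).getD 0) ∧ f₂ = (fun x => (h₂ x.1).getD 0) := by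
  rw [afPrec_afGlue_iff, afPrec_afGlue_iff, afPrec_iff_forall_ne_none]
  simp only [funext_iff, ← forall_and]
  exact forall_congr' fun x => afOplus_eq_some_and_getD_iff.symm

end

section

variable {X : Type*} [Fintype X] {M : ℕ}

theorem afZeta_eq_sum_afPrec (c : (X → AFU M) → ℕ → ℤ) (f : X → AFU M) (s : ℕ) :
    afZeta c f s = ∑ g, if AFPrec g f then c g s else 0 :=
  sum_congr rfl fun _ _ => if_congr Iff.rfl rfl rfl

theorem afZeta_afJoin (c₁ c₂ : (X → AFU M) → ℕ → ℤ) (f : X → AFU M) (s : ℕ) :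
    afZeta (afJoin c₁ c₂) f s = ∑ h₁, ∑ h₂,
      if AFPrec (fun x => afOplus (h₁ x) (h₂ x)) f then
        ∑ p ∈ antidiagonal s, c₁ h₁ p.1 * c₂ h₂ p.2 else 0 := by
  simp only [afZeta_eq_sum_afPrec, afJoin, ite_sum_zero _ (univ : Finset (X → AFU M))]
  rw [sum_comm]
  refine sum_congr rfl fun h₁ _ => ?_
  rw [sum_comm]
  refine sum_congr rfl fun h₂ _ => ?_
  rw [Fintype.sum_eq_single (fun x => afOplus (h₁ x) (h₂ x)) fun g hg => by simp [Ne.symm hg],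
    if_pos rfl]

theorem sum_antidiagonal_afZeta_mul_afZeta (c₁ c₂ : (X → AFU M) → ℕ → ℤ) (g₁ g₂ : X → AFU M)
    (s : ℕ) :
    ∑ p ∈ antidiagonal s, afZeta c₁ g₁ p.1 * afZeta c₂ g₂ p.2 =
      ∑ h₁, ∑ h₂, if AFPrec h₁ g₁ ∧ AFPrec h₂ g₂ then
        ∑ p ∈ antidiagonal s, c₁ h₁ p.1 * c₂ h₂ p.2 else 0 := by
  simp only [afZeta_eq_sum_afPrec, sum_mul_sum, ite_zero_mul_ite_zero]
  rw [sum_comm]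
  refine sum_congr rfl fun h₁ _ => ?_
  rw [sum_comm]
  exact sum_congr rfl fun h₂ _ => (ite_sum_zero _ _ _).symm

theorem sum_ite_add_eq_and_afPrec_afGlue (h₁ h₂ f : X → AFU M) (t : ℤ) :
    (∑ f₁ : {x // f x ≠ none} → Fin (M + 1), ∑ f₂ : {x // f x ≠ none} → Fin (M + 1),
      if (∀ x, (f₁ x : ℕ) + f₂ x = ((f x.1).getD 0 : Fin (M + 1))) ∧
        AFPrec h₁ (afGlue f f₁) ∧ AFPrec h₂ (afGlue f f₂) then t else 0) =
      if AFPrec (fun x => afOplus (h₁ x) (h₂ x)) f then t else 0 := by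
  simp only [add_eq_and_afPrec_afGlue_iff, ite_and, ← ite_sum_zero, Fintype.sum_ite_eq']

end

/-- The zeta transform of the join table factorizes: for any `f` (with
`S = f⁻¹(⊤)`) and `s`,
`ζ(c)(f,s) = Σ_{f₁ + f₂ = f⁰} Σ_{s₁+s₂=s} ζ(c₁)(⟨f^⊤,f₁⟩,s₁)·ζ(c₂)(⟨f^⊤,f₂⟩,s₂)`,
where `f₁, f₂` range over `[0,M]`-valued functions on `X ∖ S` summing
pointwise (ordinary addition) to `f⁰`. -/
theorem stmt13 {X : Type*} [Fintype X] (M : ℕ)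
    (c₁ c₂ : (X → AFU M) → ℕ → ℤ) (f : X → AFU M) (s : ℕ) :
    afZeta (afJoin c₁ c₂) f s =
      ∑ f₁ : {x : X // f x ≠ none} → Fin (M + 1),
      ∑ f₂ : {x : X // f x ≠ none} → Fin (M + 1),
        if ∀ x : {x : X // f x ≠ none},
            (f₁ x : ℕ) + (f₂ x : ℕ) = (((f x.1).getD 0 : Fin (M + 1)) : ℕ) then
          ∑ p ∈ Finset.HasAntidiagonal.antidiagonal s,
            afZeta c₁ (afGlue f f₁) p.1 * afZeta c₂ (afGlue f f₂) p.2
        else 0 := by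
  rw [afZeta_afJoin]
  simp only [sum_antidiagonal_afZeta_mul_afZeta, ite_sum_zero _ (univ : Finset (X → AFU M)),
    ← ite_and]
  simp only [sum_comm (γ := {x // f x ≠ none} → Fin (M + 1)) (α := X → AFU M)]
  simp only [sum_ite_add_eq_and_afPrec_afGlue]
end

section
/- Let Ex = [1, k] = {1, 2, …, k} for some k ≥ 1 and let G be a finite graph. Define W ⊆ V(G) as the result of repeatedly deleting any vertex whose degree in the current induced subgraph is at most k, until no such vertex remains. Then (1) E(G[W]) is a valid Ex-anti-factor solution (every vertex has degree 0 or ≥ k+1 in it), (2) every Ex-anti-factor solution S ⊆ E(G) satisfies S ⊆ E(G[W]), and hence (3) E(G[W]) is the unique maximum Ex-anti-factor solution. -/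
/-!
The set `W` of the theorem is the union of all vertex sets `T` whose induced subgraph has minimum
degree `> k` (the `(k+1)`-core, which is what the deletion process leaves); such sets are closed
under unions, so `W` is itself one of them. Hence every vertex of `G[W]` has degree `≥ k + 1` in
`E(G[W])`. Conversely, the vertices covered by an anti-factor solution `S ⊆ E(G)` form such a set,
since each of them meets at least `k + 1` edges of `S`, hence has at least `k + 1` neighbours in it;
so they lie in `W` and `S ⊆ E(G[W])`.
-/

open scoped Classical

open Finset

theorem Sym2.card_filter_mem_eq_ncard {V : Type*} [Fintype V] [DecidableEq V]
    (S : Finset (Sym2 V)) (u : V) :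
    (S.filter (u ∈ ·)).card = {w | s(u, w) ∈ S}.ncard := by
  rw [Set.ncard_eq_toFinset_card', ← card_image_of_injective _ (Sym2.mkEmbedding u).injective]
  congr 1
  ext e
  simp only [mem_filter, mem_image, Set.mem_toFinset, Set.mem_ofPred_eq, Sym2.mkEmbedding_apply]
  constructor
  · rintro ⟨he, hu⟩
    obtain ⟨w, rfl⟩ := Sym2.mem_iff_exists.mp hu
    exact ⟨w, he, rfl⟩
  · rintro ⟨w, hw, rfl⟩
    exact ⟨hw, Sym2.mem_mk_left u w⟩

namespace SimpleGraph

variable {V : Type*}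

def MinDegreeGT (G : SimpleGraph V) (k : ℕ) (T : Set V) : Prop :=
  ∀ u ∈ T, k + 1 ≤ {w | w ∈ T ∧ G.Adj u w}.ncard

def core (G : SimpleGraph V) (k : ℕ) : Set V :=
  {v | ∃ T : Set V, v ∈ T ∧ G.MinDegreeGT k T}

variable {G : SimpleGraph V} {k : ℕ}

theorem MinDegreeGT.subset_core {T : Set V} (hT : G.MinDegreeGT k T) : T ⊆ G.core k :=
  fun _ hv => ⟨T, hv, hT⟩

theorem minDegreeGT_core [Finite V] : G.MinDegreeGT k (G.core k) := by
  rintro u ⟨T, huT, hT⟩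
  refine (hT u huT).trans (Set.ncard_le_ncard ?_ (Set.toFinite _))
  exact fun w ⟨hwT, hadj⟩ => ⟨hT.subset_core hwT, hadj⟩

/-- `S` is an `Ex`-anti-factor solution for `Ex = [1, k]`. -/
def IsAntiFactor [DecidableEq V] (k : ℕ) (S : Finset (Sym2 V)) : Prop :=
  ∀ v : V, (S.filter (fun e => v ∈ e)).card ∉ Icc 1 k

variable [Fintype V] [DecidableEq V]

theorem IsAntiFactor.minDegreeGT_support {S : Finset (Sym2 V)} (hSG : ↑S ⊆ G.edgeSet)
    (hS : IsAntiFactor k S) : G.MinDegreeGT k {x | ∃ e ∈ S, x ∈ e} := by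
  rintro u ⟨e, he, hue⟩
  have hpos : 1 ≤ (S.filter (u ∈ ·)).card := card_pos.mpr ⟨e, mem_filter.mpr ⟨he, hue⟩⟩
  have hdeg : k + 1 ≤ (S.filter (u ∈ ·)).card := by
    have := hS u
    simp only [mem_Icc, not_and, not_le] at this
    exact this hpos
  rw [Sym2.card_filter_mem_eq_ncard] at hdeg
  refine hdeg.trans (Set.ncard_le_ncard ?_ (Set.toFinite _))
  exact fun w hw => ⟨⟨_, hw, Sym2.mem_mk_right u w⟩, hSG hw⟩

variable [DecidableRel G.Adj]

theorem mk_mem_filter_edgeFinset_iff {W : Set V} {v w : V} :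
    s(v, w) ∈ G.edgeFinset.filter (fun e => ∀ x ∈ e, x ∈ W) ↔ G.Adj v w ∧ v ∈ W ∧ w ∈ W := by
  simp [mem_filter, mem_edgeFinset, mem_edgeSet, Sym2.mem_iff]

theorem isAntiFactor_inducedEdges_core :
    IsAntiFactor k (G.edgeFinset.filter (fun e => ∀ x ∈ e, x ∈ G.core k)) := by
  intro v
  by_cases hv : v ∈ G.core k
  · rw [Sym2.card_filter_mem_eq_ncard]
    have hcard : {w | s(v, w) ∈ G.edgeFinset.filter (fun e => ∀ x ∈ e, x ∈ G.core k)}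
        = {w | w ∈ G.core k ∧ G.Adj v w} := by
      ext w
      simp only [Set.mem_ofPred_eq, mk_mem_filter_edgeFinset_iff]
      tauto
    rw [hcard, mem_Icc]
    have := minDegreeGT_core v hv
    omega
  · have hempty : (G.edgeFinset.filter (fun e => ∀ x ∈ e, x ∈ G.core k)).filter (v ∈ ·) = ∅ :=
      filter_eq_empty_iff.mpr fun e he hve => hv ((mem_filter.mp he).2 v hve)
    simp [hempty]

theorem IsAntiFactor.subset_inducedEdges_core {S : Finset (Sym2 V)} (hSG : S ⊆ G.edgeFinset)
    (hS : IsAntiFactor k S) : S ⊆ G.edgeFinset.filter (fun e => ∀ x ∈ e, x ∈ G.core k) := by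
  have hcover := (hS.minDegreeGT_support fun e he => mem_edgeFinset.mp (hSG he)).subset_core
  exact fun e he => mem_filter.mpr ⟨hSG he, fun x hx => hcover ⟨e, he, hx⟩⟩

end SimpleGraph

open SimpleGraph in
theorem stmt14_general {V : Type*} [Fintype V] [DecidableEq V] (G : SimpleGraph V)
    [DecidableRel G.Adj] (k : ℕ)
    (W : Set V)
    (hW : W = {v | ∃ T : Set V, v ∈ T ∧
      ∀ u ∈ T, k + 1 ≤ {w | w ∈ T ∧ G.Adj u w}.ncard})
    (EW : Finset (Sym2 V))
    (hEW : EW = G.edgeFinset.filter (fun e => ∀ v ∈ e, v ∈ W)) :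
    (∀ v : V, (EW.filter (fun e => v ∈ e)).card ∉ Finset.Icc 1 k) ∧
    (∀ S ⊆ G.edgeFinset,
      (∀ v : V, (S.filter (fun e => v ∈ e)).card ∉ Finset.Icc 1 k) → S ⊆ EW) ∧
    (∀ S ⊆ G.edgeFinset,
      (∀ v : V, (S.filter (fun e => v ∈ e)).card ∉ Finset.Icc 1 k) →
        S.card ≤ EW.card ∧ (S.card = EW.card → S = EW)) := by
  change W = G.core k at hW
  subst hEW hW
  have hmax : ∀ S ⊆ G.edgeFinset, IsAntiFactor k S →
      S ⊆ G.edgeFinset.filter (fun e => ∀ v ∈ e, v ∈ G.core k) :=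
    fun S hSG hS => hS.subset_inducedEdges_core hSG
  refine ⟨isAntiFactor_inducedEdges_core, hmax, fun S hSG hS => ?_⟩
  have hsub := hmax S hSG hS
  exact ⟨card_le_card hsub, fun hcard => eq_of_subset_of_card_le hsub hcard.ge⟩

/-- Let `Ex = [1,k]`, `k ≥ 1`, and let `W` be the result of repeatedly
deleting vertices of degree at most `k` (equivalently, the largest vertex set
on which the induced subgraph has minimum degree `≥ k+1`). Then the edge set
`E(G[W])` of the induced subgraph on `W` is a valid `Ex`-anti-factor solution,
every `Ex`-anti-factor solution is contained in it, and hence it is the unique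
maximum `Ex`-anti-factor solution. -/
theorem stmt14 {V : Type*} [Fintype V] [DecidableEq V] (G : SimpleGraph V)
    [DecidableRel G.Adj] (k : ℕ) (hk : 1 ≤ k)
    (W : Set V)
    (hW : W = {v | ∃ T : Set V, v ∈ T ∧
      ∀ u ∈ T, k + 1 ≤ {w | w ∈ T ∧ G.Adj u w}.ncard})
    (EW : Finset (Sym2 V))
    (hEW : EW = G.edgeFinset.filter (fun e => ∀ v ∈ e, v ∈ W)) :
    (∀ v : V, (EW.filter (fun e => v ∈ e)).card ∉ Finset.Icc 1 k) ∧
    (∀ S ⊆ G.edgeFinset,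
      (∀ v : V, (S.filter (fun e => v ∈ e)).card ∉ Finset.Icc 1 k) → S ⊆ EW) ∧
    (∀ S ⊆ G.edgeFinset,
      (∀ v : V, (S.filter (fun e => v ∈ e)).card ∉ Finset.Icc 1 k) →
        S.card ≤ EW.card ∧ (S.card = EW.card → S = EW)) :=
  stmt14_general G k W hW EW hEW
end

section
/- Let Ex ⊆ ℕ be finite and fixed with Ex ⊄ {0}. Define F_0(z) = Σ_{i ∉ Ex, i ≤ z} C(z, i), F_1(z) = Σ_{i ≥ 0, i+1 ∉ Ex, i ≤ z} C(z, i), F_2(z) = Σ_{i ≥ 0, i+2 ∉ Ex, i ≤ z} C(z, i). Then there exists a natural number z ≥ max Ex + 1 such that F_0(z)·F_2(z) ≠ F_1(z)². -/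
open Finset Filter

private lemma my_choose_mono {n : ℕ} : ∀ {k i : ℕ}, i ≤ k → k ≤ n / 2 → n.choose i ≤ n.choose k := by
  intro k
  induction k with
  | zero => intro i hik _; simp [Nat.le_zero.mp hik]
  | succ k ih =>
    intro i hik hk
    rcases Nat.eq_or_lt_of_le hik with rfl | h
    · exact le_refl _
    · exact le_trans (ih (Nat.lt_succ_iff.mp h) (le_trans (Nat.le_succ k) hk))
        (Nat.choose_le_succ_of_lt_half_left (Nat.lt_of_lt_of_le (Nat.lt_succ_self k) hk))

/-- Let `Ex ⊆ ℕ` be finite with `Ex ⊄ {0}` (it contains a positive element).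
With `F_j(z) = Σ_{i ≤ z, i+j ∉ Ex} C(z, i)` for `j = 0, 1, 2`, there exists
`z ≥ max Ex + 1` (i.e., exceeding every element of `Ex`) such that
`F_0(z)·F_2(z) ≠ F_1(z)²`. -/
theorem stmt17 (Ex : Finset ℕ) (hEx : ∃ m ∈ Ex, 0 < m) :
    ∃ z : ℕ, (∀ m ∈ Ex, m < z) ∧
      (∑ i ∈ Finset.range (z + 1), if i + 0 ∈ Ex then 0 else Nat.choose z i) *
      (∑ i ∈ Finset.range (z + 1), if i + 2 ∈ Ex then 0 else Nat.choose z i) ≠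
      (∑ i ∈ Finset.range (z + 1), if i + 1 ∈ Ex then 0 else Nat.choose z i) ^ 2 := by
  classical
  obtain ⟨m0, hm0Ex, hm0pos⟩ := hEx
  have hne : Ex.Nonempty := ⟨m0, hm0Ex⟩
  set M := Ex.max' hne with hMdef
  have hMEx : M ∈ Ex := Ex.max'_mem hne
  have hM1 : 1 ≤ M := le_trans hm0pos (Ex.le_max' _ hm0Ex)
  have hmax : ∀ m ∈ Ex, m ≤ M := fun m hm => Ex.le_max' m hm
  -- choose z large
  obtain ⟨z, hzexp, hzge⟩ : ∃ z : ℕ, ((M+1) * z^M)^2 < 2^z ∧ 2*(M*M) + 2*M + 1 ≤ z := by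
    have h := isLittleO_pow_const_const_pow_of_one_lt (R := ℝ) (2*M) (by norm_num : (1:ℝ) < 2)
    have hε : (0:ℝ) < 1/(2*((M:ℝ)+1)^2) := by positivity
    have h2 := h.def hε
    have h3 : ∀ᶠ (n:ℕ) in atTop, ((M+1) * n^M)^2 < 2^n := by
      filter_upwards [h2] with n hn
      rw [Real.norm_eq_abs, Real.norm_eq_abs, abs_of_nonneg (by positivity),
        abs_of_nonneg (by positivity)] at hn
      have hn' : 2 * ((M:ℝ)+1)^2 * (n:ℝ)^(2*M) ≤ (2:ℝ)^n := by
        have h4 := mul_le_mul_of_nonneg_left hn (show (0:ℝ) ≤ 2*((M:ℝ)+1)^2 by positivity)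
        have h5 : 2*((M:ℝ)+1)^2 * (1/(2*((M:ℝ)+1)^2) * (2:ℝ)^n) = (2:ℝ)^n := by
          field_simp
        linarith
      have hgoal : (((M+1) * n^M)^2 : ℝ) < ((2:ℝ))^n := by
        have he : (((M:ℝ)+1) * (n:ℝ)^M)^2 = ((M:ℝ)+1)^2 * (n:ℝ)^(2*M) := by
          rw [mul_pow, ← pow_mul, mul_comm M 2]
        have hpos2 : (0:ℝ) < (2:ℝ)^n := by positivity
        have hT : (0:ℝ) ≤ ((M:ℝ)+1)^2 * (n:ℝ)^(2*M) := by positivity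
        rw [he]
        linarith
      exact_mod_cast hgoal
    exact ((h3.and (eventually_ge_atTop _)).exists)
  have hzgtM : M < z := by
    have h0 : 0 ≤ 2*(M*M) := Nat.zero_le _
    linarith
  have hhalf : M ≤ z / 2 := by
    refine (Nat.le_div_iff_mul_le (by norm_num)).mpr ?_
    have h0 : 0 ≤ 2*(M*M) := Nat.zero_le _
    linarith
  refine ⟨z, fun m hm => lt_of_le_of_lt (hmax m hm) hzgtM, ?_⟩
  intro heq
  have key : ∀ j : ℕ,
      (∑ i ∈ Finset.range (z + 1), if i + j ∈ Ex then 0 else Nat.choose z i)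
      + (∑ i ∈ Finset.range (z + 1), if i + j ∈ Ex then Nat.choose z i else 0) = 2^z := by
    intro j
    rw [← Finset.sum_add_distrib, ← Nat.sum_range_choose z]
    refine Finset.sum_congr rfl fun i _ => ?_
    split_ifs <;> simp
  have Srestrict : ∀ j : ℕ,
      (∑ i ∈ Finset.range (z + 1), if i + j ∈ Ex then Nat.choose z i else 0)
      = ∑ i ∈ Finset.range (M + 1), if i + j ∈ Ex then Nat.choose z i else 0 := by
    intro j
    refine (Finset.sum_subset (Finset.range_subset_range.mpr (by omega)) ?_).symm
    intro i hi hniM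
    have hni : i + j ∉ Ex := by
      intro h
      have := hmax _ h
      simp only [Finset.mem_range] at hniM
      omega
    simp [hni]
  have Sub : ∀ j : ℕ,
      (∑ i ∈ Finset.range (z + 1), if i + j ∈ Ex then Nat.choose z i else 0) ≤ (M+1) * z^M := by
    intro j
    rw [Srestrict j]
    calc (∑ i ∈ Finset.range (M + 1), if i + j ∈ Ex then Nat.choose z i else 0)
        ≤ ∑ _i ∈ Finset.range (M+1), z^M := by
          refine Finset.sum_le_sum fun i hi => ?_
          simp only [Finset.mem_range] at hi
          split_ifs
          · exact le_trans (Nat.choose_le_pow z i) (Nat.pow_le_pow_right (by omega) (by omega))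
          · exact Nat.zero_le _
      _ = (M+1) * z^M := by rw [Finset.sum_const, Finset.card_range, smul_eq_mul]
  have S1ub : (∑ i ∈ Finset.range (z + 1), if i + 1 ∈ Ex then Nat.choose z i else 0)
      ≤ M * z.choose (M-1) := by
    rw [Srestrict 1]
    calc (∑ i ∈ Finset.range (M + 1), if i + 1 ∈ Ex then Nat.choose z i else 0)
        ≤ ∑ i ∈ Finset.range (M+1), (if i ≤ M - 1 then z.choose (M-1) else 0) := by
          refine Finset.sum_le_sum fun i hi => ?_
          split_ifs with h1 h2
          · exact my_choose_mono h2 (le_trans (Nat.sub_le M 1) hhalf)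
          · exact absurd (hmax _ h1) (by omega)
          · exact Nat.zero_le _
          · exact le_refl _
      _ = ∑ i ∈ (Finset.range (M+1)).filter (· ≤ M - 1), z.choose (M-1) :=
          (Finset.sum_filter _ _).symm
      _ = M * z.choose (M-1) := by
          have hfe : (Finset.range (M+1)).filter (· ≤ M - 1) = Finset.range M := by
            ext i
            simp only [Finset.mem_filter, Finset.mem_range]
            omega
          rw [hfe, Finset.sum_const, Finset.card_range, smul_eq_mul]
  have S0lb : z.choose M ≤ (∑ i ∈ Finset.range (z + 1), if i + 0 ∈ Ex then Nat.choose z i else 0) := by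
    have hMem : M ∈ Finset.range (z+1) := by simp; omega
    have := Finset.single_le_sum (f := fun i => if i + 0 ∈ Ex then Nat.choose z i else 0)
      (fun i _ => Nat.zero_le _) hMem
    simpa [hMEx] using this
  have hgap : 2 * (M * z.choose (M-1)) < z.choose M := by
    have hrec : z.choose (M-1+1) * (M-1+1) = z.choose (M-1) * (z - (M-1)) :=
      Nat.choose_succ_right_eq z (M-1)
    have hM' : M - 1 + 1 = M := by omega
    rw [hM'] at hrec
    have hpos : 0 < z.choose (M-1) := Nat.choose_pos (by omega)
    have hsub : 2*(M*M) < z - (M-1) := by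
      obtain ⟨K, hK⟩ : ∃ K, 2*(M*M) = K := ⟨_, rfl⟩
      rw [hK] at hzge ⊢
      omega
    have h2 : z.choose (M-1) * (2*(M*M)) < z.choose (M-1) * (z - (M-1)) :=
      (mul_lt_mul_iff_right₀ hpos).mpr hsub
    have h3 : (2 * (M * z.choose (M-1))) * M < z.choose M * M := by
      calc (2 * (M * z.choose (M-1))) * M = z.choose (M-1) * (2*(M*M)) := by ring
        _ < z.choose (M-1) * (z - (M-1)) := h2
        _ = z.choose M * M := hrec.symm
    exact Nat.lt_of_mul_lt_mul_right h3
  -- abbreviations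
  set a := (∑ i ∈ Finset.range (z + 1), if i + 0 ∈ Ex then Nat.choose z i else 0) with ha
  set b := (∑ i ∈ Finset.range (z + 1), if i + 1 ∈ Ex then Nat.choose z i else 0) with hb
  set c := (∑ i ∈ Finset.range (z + 1), if i + 2 ∈ Ex then Nat.choose z i else 0) with hc
  have hab : 2*b + 1 ≤ a := by
    have h1 := S1ub
    have h2 := S0lb
    linarith [hgap]
  have hac : a * c < 2^z := by
    have h1 : a * c ≤ ((M+1) * z^M) * ((M+1) * z^M) := Nat.mul_le_mul (Sub 0) (Sub 2)
    have h2 : ((M+1) * z^M) * ((M+1) * z^M) = ((M+1) * z^M)^2 := (sq _).symm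
    omega
  -- cast to ℤ
  have h0 := key 0
  have h1 := key 1
  have h2 := key 2
  have e0 : ((∑ i ∈ Finset.range (z + 1), if i + 0 ∈ Ex then 0 else Nat.choose z i : ℕ) : ℤ)
      = 2^z - a := by
    have hcast : ((∑ i ∈ Finset.range (z + 1), if i + 0 ∈ Ex then 0 else Nat.choose z i : ℕ) : ℤ)
        + (a : ℤ) = 2^z := by exact_mod_cast congrArg (Nat.cast : ℕ → ℤ) h0
    linarith
  have e1 : ((∑ i ∈ Finset.range (z + 1), if i + 1 ∈ Ex then 0 else Nat.choose z i : ℕ) : ℤ)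
      = 2^z - b := by
    have hcast : ((∑ i ∈ Finset.range (z + 1), if i + 1 ∈ Ex then 0 else Nat.choose z i : ℕ) : ℤ)
        + (b : ℤ) = 2^z := by exact_mod_cast congrArg (Nat.cast : ℕ → ℤ) h1
    linarith
  have e2 : ((∑ i ∈ Finset.range (z + 1), if i + 2 ∈ Ex then 0 else Nat.choose z i : ℕ) : ℤ)
      = 2^z - c := by
    have hcast : ((∑ i ∈ Finset.range (z + 1), if i + 2 ∈ Ex then 0 else Nat.choose z i : ℕ) : ℤ)
        + (c : ℤ) = 2^z := by exact_mod_cast congrArg (Nat.cast : ℕ → ℤ) h2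
    linarith
  have heqZ : ((2:ℤ)^z - a) * ((2:ℤ)^z - c) = ((2:ℤ)^z - b)^2 := by
    rw [← e0, ← e2, ← e1]
    exact_mod_cast congrArg (Nat.cast : ℕ → ℤ) heq
  have keyZ : (2:ℤ)^z * ((a:ℤ) + c - 2*b) = (a:ℤ)*c - (b:ℤ)^2 := by
    linear_combination -heqZ
  have habZ : (2:ℤ)*b + 1 ≤ a := by exact_mod_cast hab
  have hacZ : (a:ℤ)*c < 2^z := by exact_mod_cast hac
  have hcZ : (0:ℤ) ≤ c := Int.ofNat_nonneg c
  have hb2 : (0:ℤ) ≤ (b:ℤ)^2 := sq_nonneg _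
  have hone : (1:ℤ) ≤ (a:ℤ) + c - 2*b := by linarith
  have hfin : (2:ℤ)^z ≤ (2:ℤ)^z * ((a:ℤ) + c - 2*b) :=
    le_mul_of_one_le_right (by positivity) hone
  linarith
end
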